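/- If b : ℕ → ℝ satisfies b(k) ≥ b(k−1) + b(k−3) for all odd k ≥ 5 and b(k) ≥ 2·b(k−2) for all even k ≥ 4, with b(2) ≥ 2 and b(3) ≥ 3, then b(k) ≥ (√2)^k for all even k ≥ 2 and b(k) ≥ (3/(2√2))·(√2)^k for all odd k ≥ 3. -/

import Mathlib

/-!
Along the even indices the recursion `b (2n + 4) ≥ 2 b (2n + 2)` doubles from `b 2 ≥ 2`,
so `b (2n + 2) ≥ 2 ^ (n + 1) = √2 ^ (2n + 2)`. Each odd term beyond `b 3` then dominates the
sum of two even ones, `b (2n + 5) ≥ 2 ^ (n + 2) + 2 ^ (n + 1) = 3 · 2 ^ (n + 1)`, and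
`3 · 2 ^ n` is exactly `3 / (2√2) · √2 ^ (2n + 3)`.
-/

lemma sqrt_two_pow_two_mul (n : ℕ) : √2 ^ (2 * n) = 2 ^ n := by
  rw [pow_mul, Real.sq_sqrt zero_le_two]

lemma three_div_two_mul_sqrt_two_mul_sqrt_two_pow (n : ℕ) :
    3 / (2 * √2) * √2 ^ (2 * n + 3) = 3 * 2 ^ n := by
  rw [pow_add, sqrt_two_pow_two_mul, pow_succ, Real.sq_sqrt zero_le_two]
  field_simp

section Recursion

variable (b : ℕ → ℝ)

lemma two_pow_le_of_even_rec (heven : ∀ k, 4 ≤ k → Even k → b k ≥ 2 * b (k - 2))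
    (h2 : b 2 ≥ 2) (n : ℕ) : 2 ^ (n + 1) ≤ b (2 * n + 2) := by
  induction n with
  | zero => simpa using h2
  | succ n ih =>
    have hstep := heven (2 * (n + 1) + 2) (by omega) ⟨n + 2, by ring⟩
    rw [show 2 * (n + 1) + 2 - 2 = 2 * n + 2 by omega] at hstep
    rw [pow_succ]
    linarith

lemma three_mul_two_pow_le_of_odd_rec (hodd : ∀ k, 5 ≤ k → Odd k → b k ≥ b (k - 1) + b (k - 3))
    (heven : ∀ k, 4 ≤ k → Even k → b k ≥ 2 * b (k - 2)) (h2 : b 2 ≥ 2) (h3 : b 3 ≥ 3) (n : ℕ) :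
    3 * 2 ^ n ≤ b (2 * n + 3) := by
  cases n with
  | zero => simpa using h3
  | succ n =>
    have hstep := hodd (2 * (n + 1) + 3) (by omega) ⟨n + 2, by ring⟩
    rw [show 2 * (n + 1) + 3 - 1 = 2 * (n + 1) + 2 by omega,
      show 2 * (n + 1) + 3 - 3 = 2 * n + 2 by omega] at hstep
    have hnext := two_pow_le_of_even_rec b heven h2 (n + 1)
    have hprev := two_pow_le_of_even_rec b heven h2 n
    rw [pow_succ, pow_succ] at hnext
    rw [pow_succ] at hprev ⊢
    linarith

end Recursion

theorem stmt14_general (b : ℕ → ℝ)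
    (hodd : ∀ k, 5 ≤ k → Odd k → b k ≥ b (k - 1) + b (k - 3))
    (heven : ∀ k, 4 ≤ k → Even k → b k ≥ 2 * b (k - 2))
    (h2 : b 2 ≥ 2) (h3 : b 3 ≥ 3) :
    ∀ k, 2 ≤ k →
      (Even k → b k ≥ (Real.sqrt 2) ^ k) ∧
      (Odd k → b k ≥ (3 / (2 * Real.sqrt 2)) * (Real.sqrt 2) ^ k) := by
  intro k hk
  obtain ⟨n, rfl | rfl⟩ := Nat.even_or_odd' k
  · obtain ⟨n, rfl⟩ : ∃ m, n = m + 1 := ⟨n - 1, by omega⟩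
    refine ⟨fun _ => ?_, fun h => absurd h (by simp)⟩
    rw [sqrt_two_pow_two_mul, show 2 * (n + 1) = 2 * n + 2 by ring]
    exact two_pow_le_of_even_rec b heven h2 n
  · obtain ⟨n, rfl⟩ : ∃ m, n = m + 1 := ⟨n - 1, by omega⟩
    refine ⟨fun h => absurd h (by simp), fun _ => ?_⟩
    rw [show 2 * (n + 1) + 1 = 2 * n + 3 by ring, three_div_two_mul_sqrt_two_mul_sqrt_two_pow]
    exact three_mul_two_pow_le_of_odd_rec b hodd heven h2 h3 n

theorem stmt14 (b : ℕ → ℝ)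
    (hodd : ∀ k, 5 ≤ k → Odd k → b k ≥ b (k - 1) + b (k - 3))
    (heven : ∀ k, 4 ≤ k → Even k → b k ≥ 2 * b (k - 2))
    (h0 : b 0 ≥ 1) (h1 : b 1 ≥ 2) (h2 : b 2 ≥ 2) (h3 : b 3 ≥ 3) :
    ∀ k, 2 ≤ k →
      (Even k → b k ≥ (Real.sqrt 2) ^ k) ∧
      (Odd k → b k ≥ (3 / (2 * Real.sqrt 2)) * (Real.sqrt 2) ^ k) :=
  stmt14_general b hodd heven h2 h3
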